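/- Fix M > 0 and ρ ∈ (0,1/2). With λ_r as above, define α_r = −λ_r, β_r = ρ·ln(rλ_r)/r − λ_r, γ_r = (M−β_r)/(α_r−β_r), and K_{2,r} = −2e^(2+rλ_r)(rλ_r)^(1−2ρ)/(ρ·ln(rλ_r)). Then (α_r − β_r)/(K_{2,r})^(2γ_r+1) → +∞ as r → 0⁺. -/

import Mathlib

/-! Write `u = r λ_r`. Since `λ_r = M e^u` with `u < 1`, `λ_r ≤ M e`, so `u → 0⁺` and `λ_r → M`.
Then `α_r − β_r = −ρ ln u / r → +∞`, while `K_{2,r} = 2 e^{2+u} u^{1−2ρ} / (−ρ ln u) → 0⁺`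
because `1 − 2ρ > 0`. Finally `γ_r = 1 + (M + λ_r)/(α_r − β_r) → 1`, so the exponent `2γ_r + 1`
tends to `3 > 0`, and `(K_{2,r})^{2γ_r+1} → 0⁺` while the numerator blows up. -/

open Real Filter Topology Set

namespace Filter.Tendsto

variable {α : Type*} {l : Filter α} {f g : α → ℝ}

theorem atTop_div_nhdsGT_zero (hf : Tendsto f l atTop) (hg : Tendsto g l (𝓝[>] 0)) :
    Tendsto (fun x => f x / g x) l atTop := by
  simpa only [div_eq_mul_inv, Pi.inv_apply] using hf.atTop_mul_atTop₀ hg.inv_tendsto_nhdsGT_zero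

theorem rpow_nhdsGT_zero {e : ℝ} (hf : Tendsto f l (𝓝[>] 0)) (hg : Tendsto g l (𝓝 e))
    (he : 0 < e) : Tendsto (fun x => f x ^ g x) l (𝓝[>] 0) := by
  obtain ⟨hf0, hfpos⟩ := tendsto_nhdsWithin_iff.mp hf
  refine tendsto_nhdsWithin_iff.mpr ⟨?_, ?_⟩
  · simpa only [zero_rpow he.ne'] using hf0.rpow hg (Or.inr he)
  · filter_upwards [hfpos] with x hx using rpow_pos_of_pos hx _

theorem add_div_self {c : ℝ} (hf : Tendsto f l atTop) (hg : Tendsto g l (𝓝 c)) :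
    Tendsto (fun x => (f x + g x) / f x) l (𝓝 1) := by
  have h := (hg.div_atTop hf).const_add 1
  rw [add_zero] at h
  refine h.congr' ?_
  filter_upwards [hf.eventually_gt_atTop 0] with x hx
  rw [add_div, div_self hx.ne']

end Filter.Tendsto

theorem tendsto_neg_log_div_atTop {α : Type*} {l : Filter α} {f g : α → ℝ}
    (hf : Tendsto f l (𝓝[>] 0)) (hg : Tendsto g l (𝓝[>] 0)) :
    Tendsto (fun x => -log (f x) / g x) l atTop :=
  (tendsto_neg_atBot_atTop.comp (tendsto_log_nhdsGT_zero.comp hf)).atTop_div_nhdsGT_zero hg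

theorem tendsto_exp_mul_rpow_div_log_nhdsGT_zero {ρ : ℝ} (hρ0 : 0 < ρ) (hρ1 : ρ < 1 / 2) :
    Tendsto (fun u : ℝ => -(2 * exp (2 + u) * u ^ (1 - 2 * ρ)) / (ρ * log u))
      (𝓝[>] 0) (𝓝[>] 0) := by
  have hu : Tendsto (fun u : ℝ => u) (𝓝[>] 0) (𝓝 0) := tendsto_nhdsWithin_of_tendsto_nhds tendsto_id
  have hnum : Tendsto (fun u : ℝ => 2 * exp (2 + u) * u ^ (1 - 2 * ρ)) (𝓝[>] 0) (𝓝 0) := by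
    have hp : 0 < 1 - 2 * ρ := by linarith
    have h := (((continuous_exp.tendsto _).comp (hu.const_add 2)).const_mul 2).mul
      (hu.rpow_const (Or.inr hp.le))
    rwa [zero_rpow hp.ne', mul_zero] at h
  have hden : Tendsto (fun u : ℝ => ρ * -log u) (𝓝[>] 0) atTop :=
    (tendsto_neg_atBot_atTop.comp tendsto_log_nhdsGT_zero).const_mul_atTop hρ0
  refine tendsto_nhdsWithin_iff.mpr ⟨(hnum.div_atTop hden).congr fun u => ?_, ?_⟩
  · rw [mul_neg, div_neg, neg_div]
  · filter_upwards [self_mem_nhdsWithin, Ioo_mem_nhdsGT one_pos] with u (hu0 : 0 < u) hu1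
    refine div_pos_of_neg_of_neg ?_ (mul_neg_of_pos_of_neg hρ0 (log_neg hu0 hu1.2))
    exact neg_neg_of_pos (by positivity)

section FixedPoint

variable {M : ℝ} {lam : ℝ → ℝ}
  (hlam : ∀ r ∈ Ioo 0 (1 / (M * exp 1)),
    0 < lam r ∧ lam r < 1 / r ∧ M * exp (r * lam r) = lam r)
include hlam

theorem tendsto_mul_lam_nhdsGT_zero :
    Tendsto (fun r => r * lam r) (𝓝[Ioo 0 (1 / (M * exp 1))] 0) (𝓝[>] 0) := by
  have hupper : Tendsto (fun r : ℝ => r * (M * exp 1)) (𝓝[Ioo 0 (1 / (M * exp 1))] 0) (𝓝 0) := by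
    simpa only [zero_mul] using (tendsto_nhdsWithin_of_tendsto_nhds (f := fun r : ℝ => r)
      (a := 0) (s := Ioo 0 (1 / (M * exp 1))) tendsto_id).mul_const (M * exp 1)
  have hbounds : ∀ᶠ r in 𝓝[Ioo 0 (1 / (M * exp 1))] 0,
      0 < r * lam r ∧ r * lam r ≤ r * (M * exp 1) := by
    filter_upwards [self_mem_nhdsWithin] with r hr
    obtain ⟨hpos, hlt, hfix⟩ := hlam r hr
    have hu1 : r * lam r < 1 := by rwa [lt_div_iff₀ hr.1, mul_comm] at hlt
    have hM : 0 < M := pos_of_mul_pos_left (hfix ▸ hpos) (exp_pos _).le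
    have hlam_le : lam r ≤ M * exp 1 := hfix ▸ by gcongr
    exact ⟨mul_pos hr.1 hpos, by gcongr; exact hr.1.le⟩
  refine tendsto_nhdsWithin_iff.mpr ⟨?_, hbounds.mono fun _ h => h.1⟩
  exact squeeze_zero' (hbounds.mono fun _ h => h.1.le) (hbounds.mono fun _ h => h.2) hupper

theorem tendsto_lam_nhds :
    Tendsto lam (𝓝[Ioo 0 (1 / (M * exp 1))] 0) (𝓝 M) := by
  have h := ((continuous_exp.tendsto 0).comp
    (tendsto_nhdsWithin_iff.mp (tendsto_mul_lam_nhdsGT_zero hlam)).1).const_mul M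
  rw [exp_zero, mul_one] at h
  exact h.congr' (eventually_nhdsWithin_of_forall fun r hr => (hlam r hr).2.2)

end FixedPoint

theorem stmt_16_general (M ρ : ℝ) (hρ0 : 0 < ρ) (hρ1 : ρ < 1 / 2)
    (lam : ℝ → ℝ)
    (hlam : ∀ r ∈ Set.Ioo 0 (1 / (M * Real.exp 1)),
      0 < lam r ∧ lam r < 1 / r ∧ M * Real.exp (r * lam r) = lam r) :
    Tendsto (fun r =>
        ((-lam r) - (ρ * Real.log (r * lam r) / r - lam r))
          / (-(2 * Real.exp (2 + r * lam r) * (r * lam r) ^ (1 - 2 * ρ))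
              / (ρ * Real.log (r * lam r)))
            ^ (2 * ((M - (ρ * Real.log (r * lam r) / r - lam r))
                / ((-lam r) - (ρ * Real.log (r * lam r) / r - lam r))) + 1))
        (nhdsWithin 0 (Set.Ioo 0 (1 / (M * Real.exp 1)))) atTop := by
  have hr : Tendsto (fun r : ℝ => r) (𝓝[Ioo 0 (1 / (M * exp 1))] 0) (𝓝[>] 0) :=
    tendsto_id.mono_left (nhdsWithin_mono _ Ioo_subset_Ioi_self)
  have hu := tendsto_mul_lam_nhdsGT_zero hlam
  have hgap : Tendsto (fun r => (-lam r) - (ρ * log (r * lam r) / r - lam r))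
      (𝓝[Ioo 0 (1 / (M * exp 1))] 0) atTop :=
    ((tendsto_neg_log_div_atTop hu hr).const_mul_atTop hρ0).congr fun r => by ring
  have hK := (tendsto_exp_mul_rpow_div_log_nhdsGT_zero hρ0 hρ1).comp hu
  have hexp : Tendsto (fun r => 2 * ((M - (ρ * log (r * lam r) / r - lam r))
      / ((-lam r) - (ρ * log (r * lam r) / r - lam r))) + 1)
      (𝓝[Ioo 0 (1 / (M * exp 1))] 0) (𝓝 3) := by
    have hγ := hgap.add_div_self (tendsto_const_nhds (x := M) |>.add (tendsto_lam_nhds hlam))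
    have h := (hγ.const_mul 2).add_const 1
    rw [show (2 : ℝ) * 1 + 1 = 3 by norm_num] at h
    exact h.congr fun r => by ring
  exact hgap.atTop_div_nhdsGT_zero (hK.rpow_nhdsGT_zero hexp three_pos)

theorem stmt_16 (M ρ : ℝ) (hM : 0 < M) (hρ0 : 0 < ρ) (hρ1 : ρ < 1 / 2)
    (lam : ℝ → ℝ)
    (hlam : ∀ r ∈ Set.Ioo 0 (1 / (M * Real.exp 1)),
      0 < lam r ∧ lam r < 1 / r ∧ M * Real.exp (r * lam r) = lam r) :
    Tendsto (fun r =>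
        ((-lam r) - (ρ * Real.log (r * lam r) / r - lam r))
          / (-(2 * Real.exp (2 + r * lam r) * (r * lam r) ^ (1 - 2 * ρ))
              / (ρ * Real.log (r * lam r)))
            ^ (2 * ((M - (ρ * Real.log (r * lam r) / r - lam r))
                / ((-lam r) - (ρ * Real.log (r * lam r) / r - lam r))) + 1))
        (nhdsWithin 0 (Set.Ioo 0 (1 / (M * Real.exp 1)))) atTop :=
  stmt_16_general M ρ hρ0 hρ1 lam hlam
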